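/- arXiv:1809.02758 — 7 statements merged into one kernel-verified Lean document; each statement's English description precedes it below -/
import Mathlib

section
/- Let α, β : ℝ → ℝ³ be smooth unit-speed curves with α'(s) × β'(t) ≠ 0, Frenet apparatus {t_α, n_α, b_α} with curvature k_α > 0 for α, and angle function φ(s,t) ∈ (0,π) given by cos φ = ⟨α', β'⟩. Then the coefficient L = ⟨Ψ_ss, N⟩ of the second fundamental form of Ψ = α + β, where N = (α'×β')/sin φ, satisfies L = -(k_α / sin φ) ⟨b_α(s), β'(t)⟩. -/
open Matrix Real

theorem stmt_3 (α β : ℝ → (Fin 3 → ℝ)) (φ : ℝ → ℝ → ℝ) (kα : ℝ → ℝ)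
    (hα : ContDiff ℝ (⊤ : ℕ∞) α) (hβ : ContDiff ℝ (⊤ : ℕ∞) β)
    (hαunit : ∀ s, deriv α s ⬝ᵥ deriv α s = 1)
    (hβunit : ∀ t, deriv β t ⬝ᵥ deriv β t = 1)
    (hcross : ∀ s t, crossProduct (deriv α s) (deriv β t) ≠ 0)
    (hφrange : ∀ s t, φ s t ∈ Set.Ioo 0 π)
    (hφ : ∀ s t, Real.cos (φ s t) = deriv α s ⬝ᵥ deriv β t)
    (hk : ∀ s, kα s = Real.sqrt (deriv (deriv α) s ⬝ᵥ deriv (deriv α) s))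
    (hkpos : ∀ s, 0 < kα s) :
    ∀ s t,
      (deriv (fun s' => deriv (fun s'' => α s'' + β t) s') s) ⬝ᵥ
          ((Real.sin (φ s t))⁻¹ • crossProduct (deriv α s) (deriv β t))
        = -(kα s / Real.sin (φ s t)) *
            (crossProduct (deriv α s) ((kα s)⁻¹ • deriv (deriv α) s) ⬝ᵥ deriv β t) := by
  intro s t
  have hd : (fun s' => deriv (fun s'' => α s'' + β t) s') = deriv α := by
    funext x; exact deriv_add_const _
  rw [hd]
  have hk0 : kα s ≠ 0 := (hkpos s).ne'
  set a := deriv α s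
  set b := deriv (deriv α) s
  set c := deriv β t
  simp only [crossProduct, dotProduct, Fin.sum_univ_three]
  simp only [LinearMap.mk₂_apply, Pi.smul_apply, smul_eq_mul, Matrix.cons_val_zero,
    Matrix.cons_val_one, Matrix.head_cons, Matrix.cons_val_two, Matrix.tail_cons]
  field_simp
  ring_nf
end

section
/- Let α, β : ℝ → ℝ³ be smooth unit-speed curves with α' × β' ≠ 0 generating the translation surface Ψ(u,v) = α(u) + β(v) with angle φ(u,v) ∈ (0,π) (cos φ = ⟨α',β'⟩) and second fundamental form coefficients L, N (M = 0). Then the curvature of α satisfies k_α(u)² = L(u,v)² + φ_u(u,v)² for all v; in particular L² + φ_u² does not depend on v. -/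
open Matrix Real

/-- Partial derivative with respect to the first variable. -/
noncomputable def pu {V : Type*} [NormedAddCommGroup V] [NormedSpace ℝ V]
    (f : ℝ → ℝ → V) (u v : ℝ) : V := deriv (fun x => f x v) u

/-- Partial derivative with respect to the second variable. -/
noncomputable def pv {V : Type*} [NormedAddCommGroup V] [NormedSpace ℝ V]
    (f : ℝ → ℝ → V) (u v : ℝ) : V := deriv (fun y => f u y) v

lemma lagrange_id (w a b : Fin 3 → ℝ) :
    (w ⬝ᵥ w) * ((a ⬝ᵥ a) * (b ⬝ᵥ b) - (a ⬝ᵥ b) ^ 2)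
      = (w ⬝ᵥ (crossProduct a b)) ^ 2 + (a ⬝ᵥ w) ^ 2 * (b ⬝ᵥ b)
        - 2 * (a ⬝ᵥ w) * (b ⬝ᵥ w) * (a ⬝ᵥ b) + (b ⬝ᵥ w) ^ 2 * (a ⬝ᵥ a) := by
  simp [crossProduct, dotProduct, Fin.sum_univ_three]
  ring

lemma dot_const_hasDerivAt {F : ℝ → Fin 3 → ℝ} {F' : Fin 3 → ℝ} (c : Fin 3 → ℝ) {u : ℝ}
    (hF : HasDerivAt F F' u) :
    HasDerivAt (fun x => F x ⬝ᵥ c) (F' ⬝ᵥ c) u := by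
  have h := hasDerivAt_pi.mp hF
  simpa [dotProduct] using HasDerivAt.fun_sum (fun i (_ : i ∈ Finset.univ) => (h i).mul_const (c i))

lemma dot_self_hasDerivAt {F : ℝ → Fin 3 → ℝ} {F' : Fin 3 → ℝ} {u : ℝ}
    (hF : HasDerivAt F F' u) :
    HasDerivAt (fun x => F x ⬝ᵥ F x) (2 * (F' ⬝ᵥ F u)) u := by
  have h := hasDerivAt_pi.mp hF
  have := HasDerivAt.fun_sum (fun i (_ : i ∈ (Finset.univ : Finset (Fin 3))) => (h i).mul (h i))
  have e : ∑ i : Fin 3, (F' i * F u i + F u i * F' i) = 2 * (F' ⬝ᵥ F u) := by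
    simp [dotProduct, Fin.sum_univ_three]; ring
  simpa [dotProduct, e] using this

theorem stmt_8 (α β : ℝ → (Fin 3 → ℝ)) (φ L : ℝ → ℝ → ℝ)
    (hα : ContDiff ℝ (⊤ : ℕ∞) α) (hβ : ContDiff ℝ (⊤ : ℕ∞) β)
    (hαunit : ∀ u, deriv α u ⬝ᵥ deriv α u = 1)
    (hβunit : ∀ v, deriv β v ⬝ᵥ deriv β v = 1)
    (hcross : ∀ u v, crossProduct (deriv α u) (deriv β v) ≠ 0)
    (hφrange : ∀ u v, φ u v ∈ Set.Ioo 0 π)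
    (hφ : ∀ u v, Real.cos (φ u v) = deriv α u ⬝ᵥ deriv β v)
    (hL : ∀ u v, L u v = pu (pu (fun u v => α u + β v)) u v ⬝ᵥ
      ((Real.sin (φ u v))⁻¹ • crossProduct (deriv α u) (deriv β v))) :
    ∀ u v,
      Real.sqrt (deriv (deriv α) u ⬝ᵥ deriv (deriv α) u) ^ 2
        = L u v ^ 2 + (pu φ u v) ^ 2 := by
  intro u v
  set a := deriv α u with ha_def
  set b := deriv β v with hb_def
  set w := deriv (deriv α) u with hw_def
  have hαd : Differentiable ℝ α := hα.differentiable (by simp)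
  have hα'd : Differentiable ℝ (deriv α) :=
    ((contDiff_infty_iff_deriv.mp (hα.of_le (by simp))).2).differentiable (by simp)
  have hda : HasDerivAt (deriv α) w u := (hα'd u).hasDerivAt
  -- w ⬝ a = 0
  have hwa : w ⬝ᵥ a = 0 := by
    have h1 : HasDerivAt (fun x => deriv α x ⬝ᵥ deriv α x) (2 * (w ⬝ᵥ a)) u :=
      dot_self_hasDerivAt hda
    have h2 : (fun x => deriv α x ⬝ᵥ deriv α x) = fun _ : ℝ => (1 : ℝ) := by
      funext x; exact hαunit x
    rw [h2] at h1
    have := h1.unique (hasDerivAt_const u 1)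
    linarith
  -- sin φ > 0
  have hs : 0 < Real.sin (φ u v) :=
    Real.sin_pos_of_pos_of_lt_pi (hφrange u v).1 (hφrange u v).2
  have hsne : Real.sin (φ u v) ≠ 0 := ne_of_gt hs
  -- cos φ strictly between -1 and 1
  have hmemφ : φ u v ∈ Set.Icc 0 π := ⟨(hφrange u v).1.le, (hφrange u v).2.le⟩
  have hc1 : Real.cos (φ u v) < 1 := by
    have := Real.strictAntiOn_cos (Set.left_mem_Icc.mpr Real.pi_pos.le) hmemφ (hφrange u v).1
    simpa using this
  have hc2 : -1 < Real.cos (φ u v) := by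
    have := Real.strictAntiOn_cos hmemφ (Set.right_mem_Icc.mpr Real.pi_pos.le) (hφrange u v).2
    simpa using this
  -- φ x v = arccos (deriv α x ⬝ᵥ b)
  have hφarc : ∀ x, φ x v = Real.arccos (deriv α x ⬝ᵥ b) := fun x => by
    rw [← hφ x v, Real.arccos_cos (hφrange x v).1.le (hφrange x v).2.le]
  -- derivative of x ↦ deriv α x ⬝ᵥ b
  have hg : HasDerivAt (fun x => deriv α x ⬝ᵥ b) (w ⬝ᵥ b) u := dot_const_hasDerivAt b hda
  have hab : a ⬝ᵥ b = Real.cos (φ u v) := (hφ u v).symm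
  have hne1 : a ⬝ᵥ b ≠ 1 := by rw [hab]; exact ne_of_lt hc1
  have hnem1 : a ⬝ᵥ b ≠ -1 := by rw [hab]; exact ne_of_gt hc2
  have harc : HasDerivAt (fun x => Real.arccos (deriv α x ⬝ᵥ b))
      (-(1 / Real.sqrt (1 - (a ⬝ᵥ b) ^ 2)) * (w ⬝ᵥ b)) u :=
    (Real.hasDerivAt_arccos hnem1 hne1).comp (h₂ := Real.arccos) u hg
  have hsqrt : Real.sqrt (1 - (a ⬝ᵥ b) ^ 2) = Real.sin (φ u v) := by
    rw [hab, ← Real.sin_eq_sqrt_one_sub_cos_sq (hφrange u v).1.le (hφrange u v).2.le]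
  have hpuφ : pu φ u v = -(1 / Real.sin (φ u v)) * (w ⬝ᵥ b) := by
    have : (fun x => φ x v) = fun x => Real.arccos (deriv α x ⬝ᵥ b) := funext hφarc
    rw [pu, this, harc.deriv, hsqrt]
  -- L u v = (sin φ)⁻¹ * (w ⬝ᵥ (a × b))
  have hΨ : pu (pu (fun u v => α u + β v)) u v = w := by
    have h1 : (fun x => pu (fun u v => α u + β v) x v) = deriv α := by
      funext x
      rw [pu, deriv_add_const]
    rw [pu, h1]
  have hLval : L u v = (Real.sin (φ u v))⁻¹ * (w ⬝ᵥ crossProduct a b) := by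
    rw [hL u v, hΨ, _root_.dotProduct_smul, smul_eq_mul]
  -- nonnegativity of w ⬝ᵥ w
  have hww : 0 ≤ w ⬝ᵥ w := by
    exact Finset.sum_nonneg fun i _ => mul_self_nonneg _
  rw [Real.sq_sqrt hww, hLval, hpuφ]
  -- key Lagrange identity
  have key : (w ⬝ᵥ w) * (Real.sin (φ u v)) ^ 2
      = (w ⬝ᵥ crossProduct a b) ^ 2 + (w ⬝ᵥ b) ^ 2 := by
    have hid := lagrange_id w a b
    rw [hαunit u] at hid
    rw [hβunit v] at hid
    rw [_root_.dotProduct_comm a w, _root_.dotProduct_comm b w, hwa] at hid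
    rw [hab] at hid
    rw [Real.sin_sq]
    nlinarith [hid]
  set s := Real.sin (φ u v)
  set X := w ⬝ᵥ crossProduct a b
  set Y := w ⬝ᵥ b
  set W := w ⬝ᵥ w
  field_simp
  linarith [key]
end

section
/- Let φ : D ⊆ ℝ² → (0,π) and L, N : D → ℝ be smooth functions satisfying the Gauss equation K = LN/sin²φ with K everywhere nonzero, the compatibility φ_uv = −K sin φ, and the Codazzi equations L_v = (N/sin φ)φ_u, N_u = (L/sin φ)φ_v. Then ∂/∂v (L² + φ_u²) = 0 and ∂/∂u (N² + φ_v²) = 0; hence there exist functions A(u) ≥ 0 and B(v) ≥ 0 of one variable with L² + φ_u² = A(u)² and N² + φ_v² = B(v)², and these satisfy (A² − φ_u²)(B² − φ_v²) = K² sin⁴ φ. -/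
open Matrix Real Set

lemma const_of_hasDerivAt_zero {g : ℝ → ℝ} {s : Set ℝ} (hs : Convex ℝ s)
    (h : ∀ x ∈ s, HasDerivAt g 0 x) : ∀ x ∈ s, ∀ y ∈ s, g x = g y := by
  have hl : LipschitzOnWith 0 g s :=
    hs.lipschitzOnWith_of_nnnorm_hasDerivWithin_le
      (fun x hx => (h x hx).hasDerivWithinAt) (fun x hx => by simp)
  intro x hx y hy
  have := hl hx hy
  simp at this
  exact this

section helpers
variable {f : ℝ → ℝ → ℝ}

lemma hasDerivAt_fst (hf : ContDiff ℝ (⊤ : ℕ∞) fun p : ℝ × ℝ => f p.1 p.2) (u v : ℝ) :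
    HasDerivAt (fun x => f x v) (fderiv ℝ (fun p : ℝ × ℝ => f p.1 p.2) (u, v) (1, 0)) u := by
  have hd := (hf.differentiable (by simp) (u, v)).hasFDerivAt
  have hg : HasDerivAt (fun x : ℝ => (x, v)) ((1 : ℝ), (0 : ℝ)) u :=
    (hasDerivAt_id u).prodMk (hasDerivAt_const u v)
  exact hd.comp_hasDerivAt u hg

lemma hasDerivAt_snd (hf : ContDiff ℝ (⊤ : ℕ∞) fun p : ℝ × ℝ => f p.1 p.2) (u v : ℝ) :
    HasDerivAt (fun y => f u y) (fderiv ℝ (fun p : ℝ × ℝ => f p.1 p.2) (u, v) (0, 1)) v := by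
  have hd := (hf.differentiable (by simp) (u, v)).hasFDerivAt
  have hg : HasDerivAt (fun y : ℝ => (u, y)) ((0 : ℝ), (1 : ℝ)) v :=
    (hasDerivAt_const v u).prodMk (hasDerivAt_id v)
  exact hd.comp_hasDerivAt v hg

lemma pu_eq (hf : ContDiff ℝ (⊤ : ℕ∞) fun p : ℝ × ℝ => f p.1 p.2) (u v : ℝ) :
    pu f u v = fderiv ℝ (fun p : ℝ × ℝ => f p.1 p.2) (u, v) (1, 0) :=
  (hasDerivAt_fst hf u v).deriv

lemma pv_eq (hf : ContDiff ℝ (⊤ : ℕ∞) fun p : ℝ × ℝ => f p.1 p.2) (u v : ℝ) :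
    pv f u v = fderiv ℝ (fun p : ℝ × ℝ => f p.1 p.2) (u, v) (0, 1) :=
  (hasDerivAt_snd hf u v).deriv

lemma contDiff_pu (hf : ContDiff ℝ (⊤ : ℕ∞) fun p : ℝ × ℝ => f p.1 p.2) : ContDiff ℝ (⊤ : ℕ∞) fun p : ℝ × ℝ => pu f p.1 p.2 := by
  have h1 : ContDiff ℝ (⊤ : ℕ∞) fun p : ℝ × ℝ =>
      fderiv ℝ (fun q : ℝ × ℝ => f q.1 q.2) p (1, 0) :=
    (hf.fderiv_right (by simp)).clm_apply contDiff_const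
  have he : (fun p : ℝ × ℝ => pu f p.1 p.2)
      = fun p : ℝ × ℝ => fderiv ℝ (fun q : ℝ × ℝ => f q.1 q.2) p (1, 0) :=
    funext fun p => pu_eq hf p.1 p.2
  rw [he]; exact h1

lemma contDiff_pv (hf : ContDiff ℝ (⊤ : ℕ∞) fun p : ℝ × ℝ => f p.1 p.2) : ContDiff ℝ (⊤ : ℕ∞) fun p : ℝ × ℝ => pv f p.1 p.2 := by
  have h1 : ContDiff ℝ (⊤ : ℕ∞) fun p : ℝ × ℝ =>
      fderiv ℝ (fun q : ℝ × ℝ => f q.1 q.2) p (0, 1) :=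
    (hf.fderiv_right (by simp)).clm_apply contDiff_const
  have he : (fun p : ℝ × ℝ => pv f p.1 p.2)
      = fun p : ℝ × ℝ => fderiv ℝ (fun q : ℝ × ℝ => f q.1 q.2) p (0, 1) :=
    funext fun p => pv_eq hf p.1 p.2
  rw [he]; exact h1

lemma hasDerivAt_pv' (hf : ContDiff ℝ (⊤ : ℕ∞) fun p : ℝ × ℝ => f p.1 p.2) (u v : ℝ) : HasDerivAt (fun y => f u y) (pv f u v) v :=
  pv_eq hf u v ▸ hasDerivAt_snd hf u v

lemma hasDerivAt_pu' (hf : ContDiff ℝ (⊤ : ℕ∞) fun p : ℝ × ℝ => f p.1 p.2) (u v : ℝ) : HasDerivAt (fun x => f x v) (pu f u v) u :=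
  pu_eq hf u v ▸ hasDerivAt_fst hf u v

lemma pu_pv_comm (hf : ContDiff ℝ (⊤ : ℕ∞) fun p : ℝ × ℝ => f p.1 p.2) (u v : ℝ) : pu (pv f) u v = pv (pu f) u v := by
  set Φ : ℝ × ℝ → ℝ := fun p => f p.1 p.2 with hΦ
  have hder : ∀ p, HasFDerivAt Φ (fderiv ℝ Φ p) p :=
    fun p => (hf.differentiable (by simp) p).hasFDerivAt
  have h2 : HasFDerivAt (fderiv ℝ Φ) (fderiv ℝ (fderiv ℝ Φ) (u, v)) (u, v) :=
    (((hf.fderiv_right (m := (⊤ : ℕ∞)) (by simp)).differentiable (by simp)) (u, v)).hasFDerivAt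
  set F'' := fderiv ℝ (fderiv ℝ Φ) (u, v) with hF''
  have hsym := second_derivative_symmetric hder h2 ((1 : ℝ), (0 : ℝ)) ((0 : ℝ), (1 : ℝ))
  -- compute pu (pv f)
  have hΦv : HasFDerivAt (fun p : ℝ × ℝ => pv f p.1 p.2)
      ((ContinuousLinearMap.apply ℝ ℝ ((0 : ℝ), (1 : ℝ))).comp F'') (u, v) := by
    have := (ContinuousLinearMap.apply ℝ ℝ ((0 : ℝ), (1 : ℝ))).hasFDerivAt.comp (u, v) h2
    exact this.congr_of_eventuallyEq
      (Filter.Eventually.of_forall fun p => (pv_eq hf p.1 p.2))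
  have hΦu : HasFDerivAt (fun p : ℝ × ℝ => pu f p.1 p.2)
      ((ContinuousLinearMap.apply ℝ ℝ ((1 : ℝ), (0 : ℝ))).comp F'') (u, v) := by
    have := (ContinuousLinearMap.apply ℝ ℝ ((1 : ℝ), (0 : ℝ))).hasFDerivAt.comp (u, v) h2
    exact this.congr_of_eventuallyEq
      (Filter.Eventually.of_forall fun p => (pu_eq hf p.1 p.2))
  have e1 : pu (pv f) u v = F'' (1, 0) (0, 1) := by
    have hg : HasDerivAt (fun x : ℝ => (x, v)) ((1 : ℝ), (0 : ℝ)) u :=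
      (hasDerivAt_id u).prodMk (hasDerivAt_const u v)
    have := (hΦv.comp_hasDerivAt u hg).deriv
    simpa [pu, Function.comp_def] using this
  have e2 : pv (pu f) u v = F'' (0, 1) (1, 0) := by
    have hg : HasDerivAt (fun y : ℝ => (u, y)) ((0 : ℝ), (1 : ℝ)) v :=
      (hasDerivAt_const v u).prodMk (hasDerivAt_id v)
    have := (hΦu.comp_hasDerivAt v hg).deriv
    simpa [pv, Function.comp_def] using this
  rw [e1, e2, hsym]

end helpers

theorem stmt_9 (a b c d : ℝ) (hab : a < b) (hcd : c < d) (φ L N K : ℝ → ℝ → ℝ)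
    (hφ : ContDiff ℝ (⊤ : ℕ∞) fun p : ℝ × ℝ => φ p.1 p.2)
    (hLsm : ContDiff ℝ (⊤ : ℕ∞) fun p : ℝ × ℝ => L p.1 p.2)
    (hNsm : ContDiff ℝ (⊤ : ℕ∞) fun p : ℝ × ℝ => N p.1 p.2)
    (hφrange : ∀ u ∈ Ioo a b, ∀ v ∈ Ioo c d, φ u v ∈ Ioo 0 π)
    (hKne : ∀ u ∈ Ioo a b, ∀ v ∈ Ioo c d, K u v ≠ 0)
    (hGauss : ∀ u ∈ Ioo a b, ∀ v ∈ Ioo c d,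
      K u v = L u v * N u v / Real.sin (φ u v) ^ 2)
    (hcompat : ∀ u ∈ Ioo a b, ∀ v ∈ Ioo c d,
      pv (pu φ) u v = -(K u v) * Real.sin (φ u v))
    (hCod1 : ∀ u ∈ Ioo a b, ∀ v ∈ Ioo c d,
      pv L u v = (N u v / Real.sin (φ u v)) * pu φ u v)
    (hCod2 : ∀ u ∈ Ioo a b, ∀ v ∈ Ioo c d,
      pu N u v = (L u v / Real.sin (φ u v)) * pv φ u v) :
    (∀ u ∈ Ioo a b, ∀ v ∈ Ioo c d,
      pv (fun x y => L x y ^ 2 + (pu φ x y) ^ 2) u v = 0) ∧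
    (∀ u ∈ Ioo a b, ∀ v ∈ Ioo c d,
      pu (fun x y => N x y ^ 2 + (pv φ x y) ^ 2) u v = 0) ∧
    ∃ A B : ℝ → ℝ,
      (∀ u ∈ Ioo a b, 0 ≤ A u) ∧ (∀ v ∈ Ioo c d, 0 ≤ B v) ∧
      ∀ u ∈ Ioo a b, ∀ v ∈ Ioo c d,
        L u v ^ 2 + (pu φ u v) ^ 2 = (A u) ^ 2 ∧
        N u v ^ 2 + (pv φ u v) ^ 2 = (B v) ^ 2 ∧
        ((A u) ^ 2 - (pu φ u v) ^ 2) * ((B v) ^ 2 - (pv φ u v) ^ 2)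
          = (K u v) ^ 2 * Real.sin (φ u v) ^ 4 := by
  have hsin : ∀ u ∈ Ioo a b, ∀ v ∈ Ioo c d, Real.sin (φ u v) ≠ 0 := by
    intro u hu v hv
    exact ne_of_gt (Real.sin_pos_of_pos_of_lt_pi (hφrange u hu v hv).1 (hφrange u hu v hv).2)
  have key1 : ∀ u ∈ Ioo a b, ∀ v ∈ Ioo c d,
      HasDerivAt (fun y => L u y ^ 2 + (pu φ u y) ^ 2) 0 v := by
    intro u hu v hv
    have hL := hasDerivAt_pv' hLsm u v
    have hp : HasDerivAt (fun y => pu φ u y) (pv (pu φ) u v) v :=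
      hasDerivAt_pv' (contDiff_pu hφ) u v
    have h := (hL.pow 2).add (hp.pow 2)
    have hval : ((2 : ℕ) * L u v ^ (2 - 1) * pv L u v
        + (2 : ℕ) * pu φ u v ^ (2 - 1) * pv (pu φ) u v) = 0 := by
      rw [hCod1 u hu v hv, hcompat u hu v hv, hGauss u hu v hv]
      have hs := hsin u hu v hv
      field_simp
      ring
    rwa [hval] at h
  have key2 : ∀ u ∈ Ioo a b, ∀ v ∈ Ioo c d,
      HasDerivAt (fun x => N x v ^ 2 + (pv φ x v) ^ 2) 0 u := by
    intro u hu v hv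
    have hN := hasDerivAt_pu' hNsm u v
    have hp : HasDerivAt (fun x => pv φ x v) (pu (pv φ) u v) u :=
      hasDerivAt_pu' (contDiff_pv hφ) u v
    have h := (hN.pow 2).add (hp.pow 2)
    have hval : ((2 : ℕ) * N u v ^ (2 - 1) * pu N u v
        + (2 : ℕ) * pv φ u v ^ (2 - 1) * pu (pv φ) u v) = 0 := by
      rw [hCod2 u hu v hv, pu_pv_comm hφ u v, hcompat u hu v hv, hGauss u hu v hv]
      have hs := hsin u hu v hv
      field_simp
      ring
    rwa [hval] at h
  refine ⟨fun u hu v hv => (key1 u hu v hv).deriv, fun u hu v hv => (key2 u hu v hv).deriv, ?_⟩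
  -- constancy
  set v₀ : ℝ := (c + d) / 2 with hv₀def
  have hv₀ : v₀ ∈ Ioo c d := ⟨by simp [hv₀def]; linarith, by simp [hv₀def]; linarith⟩
  set u₀ : ℝ := (a + b) / 2 with hu₀def
  have hu₀ : u₀ ∈ Ioo a b := ⟨by simp [hu₀def]; linarith, by simp [hu₀def]; linarith⟩
  refine ⟨fun u => Real.sqrt (L u v₀ ^ 2 + (pu φ u v₀) ^ 2),
    fun v => Real.sqrt (N u₀ v ^ 2 + (pv φ u₀ v) ^ 2),
    fun u _ => Real.sqrt_nonneg _, fun v _ => Real.sqrt_nonneg _, ?_⟩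
  intro u hu v hv
  have hA : L u v ^ 2 + (pu φ u v) ^ 2
      = Real.sqrt (L u v₀ ^ 2 + (pu φ u v₀) ^ 2) ^ 2 := by
    rw [Real.sq_sqrt (by positivity)]
    exact const_of_hasDerivAt_zero (convex_Ioo c d) (fun y hy => key1 u hu y hy) v hv v₀ hv₀
  have hB : N u v ^ 2 + (pv φ u v) ^ 2
      = Real.sqrt (N u₀ v ^ 2 + (pv φ u₀ v) ^ 2) ^ 2 := by
    rw [Real.sq_sqrt (by positivity)]
    exact const_of_hasDerivAt_zero (convex_Ioo a b) (fun x hx => key2 x hx v hv) u hu u₀ hu₀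
  refine ⟨hA, hB, ?_⟩
  rw [← hA, ← hB]
  have hs := hsin u hu v hv
  have hK : K u v * Real.sin (φ u v) ^ 2 = L u v * N u v := by
    rw [hGauss u hu v hv]; field_simp
  calc (L u v ^ 2 + (pu φ u v) ^ 2 - (pu φ u v) ^ 2)
        * (N u v ^ 2 + (pv φ u v) ^ 2 - (pv φ u v) ^ 2)
      = (L u v * N u v) ^ 2 := by ring
    _ = (K u v * Real.sin (φ u v) ^ 2) ^ 2 := by rw [hK]
    _ = K u v ^ 2 * Real.sin (φ u v) ^ 4 := by ring
end

section
/- Let Ψ : D → ℝ³ parametrize a surface with fundamental forms I = du² + 2 cos φ du dv + dv² (φ ∈ (0,π)) and II = L du² + N dv², and suppose the Gaussian curvature K is nowhere zero on D. Then Ψ_uv = 0 on D, and consequently locally Ψ(u,v) = α(u) + β(v) for some smooth curves α, β; i.e., S is a translation surface. -/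
open Matrix Real

private lemma my_cross_dot_cross (a b c d : Fin 3 → ℝ) :
    (crossProduct a b) ⬝ᵥ (crossProduct c d) = (a ⬝ᵥ c) * (b ⬝ᵥ d) - (a ⬝ᵥ d) * (b ⬝ᵥ c) := by
  simp [crossProduct, dotProduct, Fin.sum_univ_three]
  ring

private lemma cross_triple (w a b : Fin 3 → ℝ) :
    crossProduct w (crossProduct a b) = (w ⬝ᵥ b) • a - (w ⬝ᵥ a) • b := by
  funext i
  fin_cases i <;> simp [crossProduct, dotProduct, Fin.sum_univ_three] <;> ring

private lemma HasDerivAt.dotProd {a b : ℝ → Fin 3 → ℝ} {a' b' : Fin 3 → ℝ} {t : ℝ}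
    (ha : HasDerivAt a a' t) (hb : HasDerivAt b b' t) :
    HasDerivAt (fun t => a t ⬝ᵥ b t) (a' ⬝ᵥ b t + a t ⬝ᵥ b') t := by
  have h : ∀ i : Fin 3, HasDerivAt (fun t => a t i * b t i) (a' i * b t i + a t i * b' i) t :=
    fun i => ((hasDerivAt_pi.1 ha i).mul (hasDerivAt_pi.1 hb i))
  have h2 := HasDerivAt.fun_sum (fun i (_ : i ∈ (Finset.univ : Finset (Fin 3))) => h i)
  simpa [dotProduct, Finset.sum_add_distrib] using h2

theorem stmt_11 (Ψ : ℝ → ℝ → (Fin 3 → ℝ)) (φ L N K : ℝ → ℝ → ℝ)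
    (hΨ : ContDiff ℝ (⊤ : ℕ∞) fun p : ℝ × ℝ => Ψ p.1 p.2)
    (hφsm : ContDiff ℝ (⊤ : ℕ∞) fun p : ℝ × ℝ => φ p.1 p.2)
    (hφrange : ∀ u v, φ u v ∈ Set.Ioo 0 π)
    (hE : ∀ u v, pu Ψ u v ⬝ᵥ pu Ψ u v = 1)
    (hF : ∀ u v, pu Ψ u v ⬝ᵥ pv Ψ u v = Real.cos (φ u v))
    (hG : ∀ u v, pv Ψ u v ⬝ᵥ pv Ψ u v = 1)
    (hL : ∀ u v, pu (pu Ψ) u v ⬝ᵥ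
      ((Real.sin (φ u v))⁻¹ • crossProduct (pu Ψ u v) (pv Ψ u v)) = L u v)
    (hM : ∀ u v, pv (pu Ψ) u v ⬝ᵥ
      ((Real.sin (φ u v))⁻¹ • crossProduct (pu Ψ u v) (pv Ψ u v)) = 0)
    (hN : ∀ u v, pv (pv Ψ) u v ⬝ᵥ
      ((Real.sin (φ u v))⁻¹ • crossProduct (pu Ψ u v) (pv Ψ u v)) = N u v)
    (hGauss : ∀ u v, K u v = L u v * N u v / Real.sin (φ u v) ^ 2)
    (hKne : ∀ u v, K u v ≠ 0) :
    (∀ u v, pv (pu Ψ) u v = 0) ∧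
    ∃ α β : ℝ → (Fin 3 → ℝ), ∀ u v, Ψ u v = α u + β v := by
  set F : ℝ × ℝ → (Fin 3 → ℝ) := fun p => Ψ p.1 p.2 with hF_def
  set A : ℝ × ℝ → (ℝ × ℝ) →L[ℝ] (Fin 3 → ℝ) := fderiv ℝ F with hA_def
  have hA : ContDiff ℝ (⊤ : ℕ∞) A := hΨ.fderiv_right (by simp)
  have hFd : ∀ p : ℝ × ℝ, HasFDerivAt F (A p) p :=
    fun p => (hΨ.differentiable (by simp) p).hasFDerivAt
  have hAd : ∀ p : ℝ × ℝ, HasFDerivAt A (fderiv ℝ A p) p :=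
    fun p => (hA.differentiable (by simp) p).hasFDerivAt
  -- first partials
  have hpu : ∀ u v, HasDerivAt (fun x => Ψ x v) (A (u, v) (1, 0)) u := by
    intro u v
    have hc : HasDerivAt (fun x : ℝ => (x, v)) ((1 : ℝ), (0 : ℝ)) u :=
      HasDerivAt.prodMk (hasDerivAt_id u) (hasDerivAt_const u v)
    exact (hFd (u, v)).comp_hasDerivAt u hc
  have hpv : ∀ u v, HasDerivAt (fun y => Ψ u y) (A (u, v) (0, 1)) v := by
    intro u v
    have hc : HasDerivAt (fun y : ℝ => (u, y)) ((0 : ℝ), (1 : ℝ)) v :=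
      HasDerivAt.prodMk (hasDerivAt_const v u) (hasDerivAt_id v)
    exact (hFd (u, v)).comp_hasDerivAt v hc
  have hpu_eq : ∀ u v, pu Ψ u v = A (u, v) (1, 0) := fun u v => (hpu u v).deriv
  have hpv_eq : ∀ u v, pv Ψ u v = A (u, v) (0, 1) := fun u v => (hpv u v).deriv
  -- second partials
  have hApu : ∀ u v (e : ℝ × ℝ),
      HasDerivAt (fun y => A (u, y) e) ((fderiv ℝ A (u, v) (0, 1)) e) v := by
    intro u v e
    have hc : HasDerivAt (fun y : ℝ => (u, y)) ((0 : ℝ), (1 : ℝ)) v :=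
      HasDerivAt.prodMk (hasDerivAt_const v u) (hasDerivAt_id v)
    have h1 : HasDerivAt (fun y => A (u, y)) (fderiv ℝ A (u, v) (0, 1)) v :=
      (hAd (u, v)).comp_hasDerivAt v hc
    simpa using h1.clm_apply (hasDerivAt_const v e)
  have hApv : ∀ u v (e : ℝ × ℝ),
      HasDerivAt (fun x => A (x, v) e) ((fderiv ℝ A (u, v) (1, 0)) e) u := by
    intro u v e
    have hc : HasDerivAt (fun x : ℝ => (x, v)) ((1 : ℝ), (0 : ℝ)) u :=
      HasDerivAt.prodMk (hasDerivAt_id u) (hasDerivAt_const u v)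
    have h1 : HasDerivAt (fun x => A (x, v)) (fderiv ℝ A (u, v) (1, 0)) u :=
      (hAd (u, v)).comp_hasDerivAt u hc
    simpa using h1.clm_apply (hasDerivAt_const u e)
  have hpvpu : ∀ u v, HasDerivAt (fun y => pu Ψ u y)
      ((fderiv ℝ A (u, v) (0, 1)) (1, 0)) v := by
    intro u v
    have := hApu u v (1, 0)
    simpa [funext fun y => (hpu_eq u y).symm] using this
  have hpupv : ∀ u v, HasDerivAt (fun x => pv Ψ x v)
      ((fderiv ℝ A (u, v) (1, 0)) (0, 1)) u := by
    intro u v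
    have := hApv u v (0, 1)
    simpa [funext fun x => (hpv_eq x v).symm] using this
  have hpvpu_eq : ∀ u v, pv (pu Ψ) u v = (fderiv ℝ A (u, v) (0, 1)) (1, 0) :=
    fun u v => (hpvpu u v).deriv
  have hpupv_eq : ∀ u v, pu (pv Ψ) u v = (fderiv ℝ A (u, v) (1, 0)) (0, 1) :=
    fun u v => (hpupv u v).deriv
  -- symmetry of second derivative
  have hsymm : ∀ u v, pv (pu Ψ) u v = pu (pv Ψ) u v := by
    intro u v
    rw [hpvpu_eq, hpupv_eq]
    exact second_derivative_symmetric hFd (hAd (u, v)) _ _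
  -- w ⬝ a = 0
  have hwa : ∀ u v, pv (pu Ψ) u v ⬝ᵥ pu Ψ u v = 0 := by
    intro u v
    have hconst : HasDerivAt (fun y => pu Ψ u y ⬝ᵥ pu Ψ u y) 0 v := by
      have h1 : (fun y => pu Ψ u y ⬝ᵥ pu Ψ u y) = fun _ => (1 : ℝ) :=
        funext fun y => hE u y
      rw [h1]; exact hasDerivAt_const v 1
    have ha := hpvpu u v
    have hd := ha.dotProd ha
    have h0 := hconst.unique hd
    rw [hpvpu_eq u v]
    have hc : (fderiv ℝ A (u, v) (0, 1)) (1, 0) ⬝ᵥ pu Ψ u v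
        = pu Ψ u v ⬝ᵥ (fderiv ℝ A (u, v) (0, 1)) (1, 0) := dotProduct_comm _ _
    linarith [h0, hc]
  -- w ⬝ b = 0  (via symmetry of second derivatives)
  have hwb : ∀ u v, pv (pu Ψ) u v ⬝ᵥ pv Ψ u v = 0 := by
    intro u v
    have hconst : HasDerivAt (fun x => pv Ψ x v ⬝ᵥ pv Ψ x v) 0 u := by
      have h1 : (fun x => pv Ψ x v ⬝ᵥ pv Ψ x v) = fun _ => (1 : ℝ) :=
        funext fun x => hG x v
      rw [h1]; exact hasDerivAt_const u 1
    have ha := hpupv u v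
    have hd := ha.dotProd ha
    have h0 := hconst.unique hd
    rw [hsymm u v, hpupv_eq u v]
    have hc : (fderiv ℝ A (u, v) (1, 0)) (0, 1) ⬝ᵥ pv Ψ u v
        = pv Ψ u v ⬝ᵥ (fderiv ℝ A (u, v) (1, 0)) (0, 1) := dotProduct_comm _ _
    linarith [h0, hc]
  -- main vanishing
  have hmain : ∀ u v, pv (pu Ψ) u v = 0 := by
    intro u v
    have hs : Real.sin (φ u v) ≠ 0 :=
      ne_of_gt (Real.sin_pos_of_pos_of_lt_pi (hφrange u v).1 (hφrange u v).2)
    have hwn : pv (pu Ψ) u v ⬝ᵥ crossProduct (pu Ψ u v) (pv Ψ u v) = 0 := by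
      have h1 := hM u v
      rw [dotProduct_smul] at h1
      rcases mul_eq_zero.1 h1 with h | h
      · exact absurd (inv_eq_zero.1 h) hs
      · exact h
    have hba : pv Ψ u v ⬝ᵥ pu Ψ u v = Real.cos (φ u v) := by
      rw [dotProduct_comm]; exact hF u v
    have hnn : crossProduct (pu Ψ u v) (pv Ψ u v) ⬝ᵥ crossProduct (pu Ψ u v) (pv Ψ u v)
        = Real.sin (φ u v) ^ 2 := by
      rw [my_cross_dot_cross, hE u v, hG u v, hF u v, hba]
      nlinarith [Real.sin_sq_add_cos_sq (φ u v)]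
    have hwxn : crossProduct (pv (pu Ψ) u v) (crossProduct (pu Ψ u v) (pv Ψ u v)) = 0 := by
      rw [cross_triple, hwb u v, hwa u v]
      simp
    have h0 := my_cross_dot_cross (pv (pu Ψ) u v) (crossProduct (pu Ψ u v) (pv Ψ u v))
      (pv (pu Ψ) u v) (crossProduct (pu Ψ u v) (pv Ψ u v))
    rw [hwxn, hwn, hnn] at h0
    simp only [zero_dotProduct, dotProduct_zero, zero_mul, mul_zero, sub_zero] at h0
    have hww : pv (pu Ψ) u v ⬝ᵥ pv (pu Ψ) u v = 0 := by
      have hs2 : Real.sin (φ u v) ^ 2 ≠ 0 := pow_ne_zero 2 hs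
      rcases mul_eq_zero.1 h0.symm with h | h
      · exact h
      · exact absurd h hs2
    exact dotProduct_self_eq_zero.1 hww
  refine ⟨hmain, fun u => Ψ u 0, fun v => Ψ 0 v - Ψ 0 0, ?_⟩
  -- pu Ψ does not depend on v
  have hpuconst : ∀ u y, pu Ψ u y = pu Ψ u 0 := by
    intro u y
    have hdiff : Differentiable ℝ (fun y => pu Ψ u y) :=
      fun y => (hpvpu u y).differentiableAt
    have hder : ∀ y, deriv (fun y => pu Ψ u y) y = 0 := by
      intro y
      have h1 : deriv (fun y => pu Ψ u y) y = pv (pu Ψ) u y := rfl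
      rw [h1, hmain]
    exact is_const_of_deriv_eq_zero hdiff hder y 0
  intro u v
  have hdiff2 : Differentiable ℝ (fun x => Ψ x v - Ψ x 0) :=
    fun x => ((hpu x v).sub (hpu x 0)).differentiableAt
  have hder2 : ∀ x, deriv (fun x => Ψ x v - Ψ x 0) x = 0 := by
    intro x
    have h1 := (hpu x v).fun_sub (hpu x 0)
    rw [h1.deriv, ← hpu_eq x v, ← hpu_eq x 0, hpuconst x v, sub_self]
  have := is_const_of_deriv_eq_zero hdiff2 hder2 u 0
  have h2 : Ψ u v - Ψ u 0 = Ψ 0 v - Ψ 0 0 := by simpa using this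
  have : Ψ u v = Ψ u 0 + (Ψ 0 v - Ψ 0 0) := by
    rw [← h2]; abel
  exact this
end

section
/- Let φ, L : D → ℝ be smooth with φ ∈ (0,π) and K nowhere zero, and let τ(u) be the torsion and A(u) = (L² + φ_u²)^{1/2} > 0 the curvature of the parametric curves v = const of a surface with fundamental forms I = du² + 2 cos φ du dv + dv², II = L du² + N dv². Then φ_uu = τ(u) L + (cos φ/sin φ) L² + (A'(u)/A(u)) φ_u. -/
open Matrix Real

theorem stmt_13 (φ L N K : ℝ → ℝ → ℝ) (A τ : ℝ → ℝ)
    (hφsm : ContDiff ℝ (⊤ : ℕ∞) fun p : ℝ × ℝ => φ p.1 p.2)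
    (hLsm : ContDiff ℝ (⊤ : ℕ∞) fun p : ℝ × ℝ => L p.1 p.2)
    (hAsm : ContDiff ℝ (⊤ : ℕ∞) A)
    (hφrange : ∀ u v, φ u v ∈ Set.Ioo 0 π)
    (hGauss : ∀ u v, K u v = L u v * N u v / Real.sin (φ u v) ^ 2)
    (hKne : ∀ u v, K u v ≠ 0)
    (hA : ∀ u v, (A u) ^ 2 = L u v ^ 2 + (pu φ u v) ^ 2)
    (hApos : ∀ u, 0 < A u)
    (hτ : ∀ u v, τ u =
      (L u v * pu (pu φ) u v
        - (L u v * Real.cos (φ u v) / Real.sin (φ u v)) * (L u v ^ 2 + (pu φ u v) ^ 2)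
        - pu L u v * pu φ u v) / (L u v ^ 2 + (pu φ u v) ^ 2)) :
    ∀ u v,
      pu (pu φ) u v = τ u * L u v
        + (Real.cos (φ u v) / Real.sin (φ u v)) * L u v ^ 2
        + (deriv A u / A u) * pu φ u v := by
  intro u v
  have hsin : Real.sin (φ u v) ≠ 0 :=
    ne_of_gt (Real.sin_pos_of_pos_of_lt_pi (hφrange u v).1 (hφrange u v).2)
  have hAne : A u ≠ 0 := ne_of_gt (hApos u)
  -- smoothness of slices
  have hg : ContDiff ℝ (⊤ : ℕ∞) (fun x : ℝ => φ x v) := by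
    have : ContDiff ℝ (⊤ : ℕ∞) (fun x : ℝ => (x, v)) := ContDiff.prodMk contDiff_id contDiff_const
    exact hφsm.comp this
  have hl : ContDiff ℝ (⊤ : ℕ∞) (fun x : ℝ => L x v) := by
    have : ContDiff ℝ (⊤ : ℕ∞) (fun x : ℝ => (x, v)) := ContDiff.prodMk contDiff_id contDiff_const
    exact hLsm.comp this
  have hg' := (contDiff_infty_iff_deriv.1 (hg.of_le (by simp))).2
  -- key identity A * A' = L * L_u + φ_u * φ_uu
  have key : A u * deriv A u = L u v * pu L u v + pu φ u v * pu (pu φ) u v := by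
    have hF : HasDerivAt (fun x => A x ^ 2) (2 * A u * deriv A u) u := by
      have := (hAsm.differentiable (by simp) u).hasDerivAt.fun_pow 2
      simpa [mul_comm, mul_assoc] using this
    have hG : HasDerivAt (fun x => L x v ^ 2 + (pu φ x v) ^ 2)
        (2 * L u v * pu L u v + 2 * pu φ u v * pu (pu φ) u v) u := by
      have h1 : HasDerivAt (fun x => L x v) (pu L u v) u :=
        (hl.differentiable (by simp) u).hasDerivAt
      have h2 : HasDerivAt (fun x => pu φ x v) (pu (pu φ) u v) u := by
        have := (hg'.differentiable (by simp) u).hasDerivAt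
        simpa [pu] using this
      have := (h1.fun_pow 2).fun_add (h2.fun_pow 2)
      simpa [mul_comm, mul_assoc] using this
    have heq : (fun x => A x ^ 2) = fun x => L x v ^ 2 + (pu φ x v) ^ 2 :=
      funext fun x => hA x v
    rw [heq] at hF
    have := hF.unique hG
    linarith
  have hA2 : L u v ^ 2 + (pu φ u v) ^ 2 ≠ 0 := by
    rw [← hA u v]; positivity
  rw [hτ u v]
  field_simp
  linear_combination (-(A u * Real.sin (φ u v) * pu φ u v)) * key
    + (deriv A u * pu φ u v * Real.sin (φ u v)) * hA u v
end

section
/- Let β = (β₁, β₂, β₃) : J → ℝ³ be a smooth unit-speed curve and r > 0, and suppose Ψ(s,t) = (r cos(s/r), r sin(s/r), 0) + β(t) parametrizes a regular surface in ℝ³ with constant Gaussian curvature K. Then K = 0. -/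
open Matrix Real

lemma circ_deriv (r : ℝ) (hr : r ≠ 0) (s : ℝ) :
    HasDerivAt (fun x : ℝ => ![r * Real.cos (x / r), r * Real.sin (x / r), (0:ℝ)])
      ![-Real.sin (s/r), Real.cos (s/r), 0] s := by
  rw [hasDerivAt_pi]
  intro i
  have hd : HasDerivAt (fun x : ℝ => x / r) (1/r) s := (hasDerivAt_id s).div_const r
  fin_cases i
  · have := ((Real.hasDerivAt_cos (s/r)).comp s hd).const_mul r
    simpa using this.congr_deriv (by field_simp)
  · have := ((Real.hasDerivAt_sin (s/r)).comp s hd).const_mul r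
    simpa using this.congr_deriv (by field_simp)
  · simpa using hasDerivAt_const s (0:ℝ)

lemma circ_deriv2 (r : ℝ) (hr : r ≠ 0) (s : ℝ) :
    HasDerivAt (fun x : ℝ => ![-Real.sin (x / r), Real.cos (x / r), (0:ℝ)])
      ![-(Real.cos (s/r))/r, -(Real.sin (s/r))/r, 0] s := by
  rw [hasDerivAt_pi]
  intro i
  have hd : HasDerivAt (fun x : ℝ => x / r) (1/r) s := (hasDerivAt_id s).div_const r
  fin_cases i
  · have := ((Real.hasDerivAt_sin (s/r)).comp s hd).neg
    simpa [Function.comp_def, Pi.neg_def] using this.congr_deriv (by field_simp)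
  · have := (Real.hasDerivAt_cos (s/r)).comp s hd
    simpa [Function.comp_def] using this.congr_deriv (by field_simp)
  · simpa using hasDerivAt_const s (0:ℝ)

theorem stmt_14 (r : ℝ) (hr : 0 < r) (β : ℝ → (Fin 3 → ℝ)) (J : Set ℝ)
    (hJ : IsOpen J) (hJne : J.Nonempty)
    (hβ : ContDiff ℝ (⊤ : ℕ∞) β)
    (hβunit : ∀ t ∈ J, deriv β t ⬝ᵥ deriv β t = 1)
    (Ψ : ℝ → ℝ → (Fin 3 → ℝ))
    (hΨ : ∀ s t, Ψ s t = ![r * Real.cos (s / r), r * Real.sin (s / r), 0] + β t)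
    (hreg : ∀ s, ∀ t ∈ J, crossProduct (pu Ψ s t) (pv Ψ s t) ≠ 0)
    (K : ℝ)
    (hK : ∀ s, ∀ t ∈ J,
      (Matrix.det (Matrix.of ![pu Ψ s t, pv Ψ s t, pu (pu Ψ) s t]) *
          Matrix.det (Matrix.of ![pu Ψ s t, pv Ψ s t, pv (pv Ψ) s t]) -
        Matrix.det (Matrix.of ![pu Ψ s t, pv Ψ s t, pv (pu Ψ) s t]) ^ 2) /
        (crossProduct (pu Ψ s t) (pv Ψ s t) ⬝ᵥ crossProduct (pu Ψ s t) (pv Ψ s t)) ^ 2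
        = K) :
    K = 0 := by
  obtain ⟨t₀, ht₀⟩ := hJne
  have hr' : r ≠ 0 := hr.ne'
  -- first partial in s
  have hpu : ∀ s t, pu Ψ s t = ![-Real.sin (s/r), Real.cos (s/r), 0] := by
    intro s t
    have hfun : (fun x => Ψ x t)
        = fun x => ![r * Real.cos (x / r), r * Real.sin (x / r), (0:ℝ)] + β t :=
      funext fun x => hΨ x t
    have h := (circ_deriv r hr' s).add_const (β t)
    rw [pu, hfun]
    exact h.deriv
  -- second partial in s
  have hpuu : ∀ s t, pu (pu Ψ) s t = ![-(Real.cos (s/r))/r, -(Real.sin (s/r))/r, 0] := by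
    intro s t
    have hfun : (fun x => pu Ψ x t)
        = fun x => ![-Real.sin (x / r), Real.cos (x / r), (0:ℝ)] :=
      funext fun x => hpu x t
    rw [pu, hfun]
    exact (circ_deriv2 r hr' s).deriv
  -- partial in t
  have hpv : ∀ s t, pv Ψ s t = deriv β t := by
    intro s t
    have hfun : (fun y => Ψ s y)
        = fun y => ![r * Real.cos (s / r), r * Real.sin (s / r), (0:ℝ)] + β y :=
      funext fun y => hΨ s y
    rw [pv, hfun, deriv_const_add]
  -- mixed partial vanishes
  have hpvu : ∀ s t, pv (pu Ψ) s t = 0 := by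
    intro s t
    have hfun : (fun y => pu Ψ s y)
        = fun _ => ![-Real.sin (s/r), Real.cos (s/r), (0:ℝ)] :=
      funext fun y => hpu s y
    rw [pv, hfun, deriv_const]
  -- second partial in t
  have hpvv : ∀ s t, pv (pv Ψ) s t = deriv (deriv β) t := by
    intro s t
    have hfun : (fun y => pv Ψ s y) = fun y => deriv β y :=
      funext fun y => hpv s y
    rw [pv, hfun]
  set w := deriv β t₀ with hw
  set v := deriv (deriv β) t₀ with hv
  -- nonzero denominator
  have hN0 : crossProduct (pu Ψ 0 t₀) (pv Ψ 0 t₀) ≠ 0 := hreg 0 t₀ ht₀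
  have hNval : crossProduct (pu Ψ 0 t₀) (pv Ψ 0 t₀) ⬝ᵥ crossProduct (pu Ψ 0 t₀) (pv Ψ 0 t₀) ≠ 0 :=
    (dotProduct_self_eq_zero.not.mpr hN0)
  have h1 := hK 0 t₀ ht₀
  have h2 := hK (Real.pi * r) t₀ ht₀
  have hdiv : (Real.pi * r) / r = Real.pi := by field_simp
  rw [hpu, hpv, hpuu, hpvu, hpvv] at h1 h2
  rw [hpu, hpv] at hNval
  rw [hdiv] at h2
  simp only [zero_div, Real.cos_zero, Real.sin_zero, Real.cos_pi, Real.sin_pi,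
    neg_zero, Matrix.det_fin_three, Matrix.of_apply, cross_apply,
    Matrix.cons_val', Matrix.cons_val_zero, Matrix.cons_val_one, Matrix.head_cons,
    Matrix.empty_val', Matrix.cons_val_fin_one, Matrix.head_fin_const,
    Matrix.cons_val_two, Matrix.tail_cons, dotProduct, Pi.zero_apply,
    Fin.sum_univ_three, one_mul, neg_mul, mul_zero, zero_mul, neg_neg, mul_neg,
    sub_zero, zero_sub, zero_add, add_zero, sub_self, neg_sub, mul_one] at h1 h2 hNval
  set a := deriv β t₀ 0 with ha
  set b := deriv β t₀ 1 with hb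
  set c := deriv β t₀ 2 with hc
  set p := deriv (deriv β) t₀ 0 with hp
  set q := deriv (deriv β) t₀ 2 with hq
  rw [div_eq_iff (pow_ne_zero 2 hNval)] at h1 h2
  have hKN : K * (c * c + a * a) ^ 2 = 0 := by linear_combination (-1/2 : ℝ) * h1 - (1/2 : ℝ) * h2
  rcases mul_eq_zero.mp hKN with h | h
  · exact h
  · exact absurd h (pow_ne_zero 2 hNval)
end

section
/- Suppose φ : D ⊆ ℝ² → (0,π) and A : I → (0,∞) are smooth, K ∈ {−1, 1}, φ satisfies φ_uv = −K sin φ and the planar-torsion equation φ_uu = (cos φ/sin φ)(A² − φ_u²) + (A'/A)φ_u with A² − φ_u² > 0. Then K φ_v = (3 φ_u cos φ sin²φ − (A'/A) sin³φ)/(A² − φ_u²). -/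
open Real

section Aux

/-- Slice derivative in the first variable equals fderiv applied to (1,0). -/
lemma slice_u (Ψ : ℝ × ℝ → ℝ) (h : ContDiff ℝ (⊤ : ℕ∞) Ψ) (u v : ℝ) :
    HasDerivAt (fun x => Ψ (x, v)) (fderiv ℝ Ψ (u, v) (1, 0)) u := by
  have hΨ : HasFDerivAt Ψ (fderiv ℝ Ψ (u, v)) (u, v) :=
    (h.differentiable (by simp) (u, v)).hasFDerivAt
  have hline : HasFDerivAt (fun x : ℝ => (x, v))
      ((ContinuousLinearMap.id ℝ ℝ).prod 0) u :=
    HasFDerivAt.prodMk (hasFDerivAt_id u) (hasFDerivAt_const v u)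
  have := (hΨ.comp u hline).hasDerivAt
  simpa [Function.comp_def] using this

/-- Slice derivative in the second variable equals fderiv applied to (0,1). -/
lemma slice_v (Ψ : ℝ × ℝ → ℝ) (h : ContDiff ℝ (⊤ : ℕ∞) Ψ) (u v : ℝ) :
    HasDerivAt (fun y => Ψ (u, y)) (fderiv ℝ Ψ (u, v) (0, 1)) v := by
  have hΨ : HasFDerivAt Ψ (fderiv ℝ Ψ (u, v)) (u, v) :=
    (h.differentiable (by simp) (u, v)).hasFDerivAt
  have hline : HasFDerivAt (fun y : ℝ => (u, y))
      ((0 : ℝ →L[ℝ] ℝ).prod (ContinuousLinearMap.id ℝ ℝ)) v :=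
    HasFDerivAt.prodMk (hasFDerivAt_const u v) (hasFDerivAt_id v)
  have := (hΨ.comp v hline).hasDerivAt
  simpa [Function.comp_def] using this

/-- fderiv of evaluation of fderiv at a constant vector. -/
lemma fderiv_eval (Ψ : ℝ × ℝ → ℝ) (h : ContDiff ℝ (⊤ : ℕ∞) Ψ) (q : ℝ × ℝ) (w : ℝ × ℝ) :
    fderiv ℝ (fun p => fderiv ℝ Ψ p w) q =
      (ContinuousLinearMap.apply ℝ ℝ w).comp (fderiv ℝ (fderiv ℝ Ψ) q) := by
  have h1 : HasFDerivAt (fderiv ℝ Ψ) (fderiv ℝ (fderiv ℝ Ψ) q) q :=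
    (((h.fderiv_right (m := (⊤ : ℕ∞)) (by simp)).differentiable (by simp)) q).hasFDerivAt
  exact ((ContinuousLinearMap.apply ℝ ℝ w).hasFDerivAt.comp q h1).fderiv

end Aux

theorem stmt_17 (D : Set (ℝ × ℝ)) (hD : IsOpen D) (φ : ℝ → ℝ → ℝ) (A : ℝ → ℝ) (K : ℝ)
    (hφsm : ContDiff ℝ (⊤ : ℕ∞) fun p : ℝ × ℝ => φ p.1 p.2)
    (hAsm : ContDiff ℝ (⊤ : ℕ∞) A)
    (hApos : ∀ u, 0 < A u)
    (hK : K = 1 ∨ K = -1)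
    (hφrange : ∀ u v, (u, v) ∈ D → φ u v ∈ Set.Ioo 0 π)
    (hcompat : ∀ u v, (u, v) ∈ D → pv (pu φ) u v = -K * Real.sin (φ u v))
    (hX : ∀ u v, (u, v) ∈ D → 0 < (A u) ^ 2 - (pu φ u v) ^ 2)
    (heq : ∀ u v, (u, v) ∈ D →
      pu (pu φ) u v = (Real.cos (φ u v) / Real.sin (φ u v)) * ((A u) ^ 2 - (pu φ u v) ^ 2)
        + (deriv A u / A u) * pu φ u v) :
    ∀ u v, (u, v) ∈ D →
      K * pv φ u v =
        (3 * pu φ u v * Real.cos (φ u v) * Real.sin (φ u v) ^ 2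
          - (deriv A u / A u) * Real.sin (φ u v) ^ 3) / ((A u) ^ 2 - (pu φ u v) ^ 2) := by
  intro u v huv
  set Φ : ℝ × ℝ → ℝ := fun p : ℝ × ℝ => φ p.1 p.2 with hΦdef
  have hΦ : ContDiff ℝ (⊤ : ℕ∞) Φ := hφsm
  set Ψ : ℝ × ℝ → ℝ := fun p => fderiv ℝ Φ p (1, 0) with hΨdef
  have hΨ : ContDiff ℝ (⊤ : ℕ∞) Ψ :=
    (hΦ.fderiv_right (by simp)).clm_apply contDiff_const
  -- pu φ in terms of Ψ
  have hpuΨ : ∀ x y, pu φ x y = Ψ (x, y) := fun x y => (slice_u Φ hΦ x y).deriv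
  -- pv (pu φ) in terms of fderiv Ψ
  have hpvpu : ∀ x y, pv (pu φ) x y = fderiv ℝ Ψ (x, y) (0, 1) := by
    intro x y
    have : (fun y' => pu φ x y') = fun y' => Ψ (x, y') := funext fun y' => hpuΨ x y'
    show deriv (fun y' => pu φ x y') y = _
    rw [this]
    exact (slice_v Ψ hΨ x y).deriv
  -- pu (pu φ) in terms of fderiv Ψ
  have hpupu : ∀ x y, pu (pu φ) x y = fderiv ℝ Ψ (x, y) (1, 0) := by
    intro x y
    have : (fun x' => pu φ x' y) = fun x' => Ψ (x', y) := funext fun x' => hpuΨ x' y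
    show deriv (fun x' => pu φ x' y) x = _
    rw [this]
    exact (slice_u Ψ hΨ x y).deriv
  -- abbreviations
  set s := Real.sin (φ u v) with hs
  set c := Real.cos (φ u v) with hc
  set p := pu φ u v with hp
  set φv := pv φ u v with hφv
  set r := deriv A u / A u with hr
  have hsin_pos : 0 < s := Real.sin_pos_of_pos_of_lt_pi (hφrange u v huv).1 (hφrange u v huv).2
  have hsne : s ≠ 0 := ne_of_gt hsin_pos
  have hXpos := hX u v huv
  have hXne : (A u) ^ 2 - p ^ 2 ≠ 0 := ne_of_gt hXpos
  -- basic slice derivatives at (u,v)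
  have hDφu : HasDerivAt (fun x => φ x v) p u := by
    have := slice_u Φ hΦ u v
    rwa [← (slice_u Φ hΦ u v).deriv] at this
  have hDφv : HasDerivAt (fun y => φ u y) φv v := by
    have := slice_v Φ hΦ u v
    rwa [← (slice_v Φ hΦ u v).deriv] at this
  -- derivative of Ψ(u,·) at v equals -K sin φ
  have hΨv_val : fderiv ℝ Ψ (u, v) (0, 1) = -K * s := by
    rw [← hpvpu u v]; exact hcompat u v huv
  have hDΨv : HasDerivAt (fun y => Ψ (u, y)) (-K * s) v := by
    have := slice_v Ψ hΨ u v; rwa [hΨv_val] at this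
  -- second derivatives
  set Ψ'' := fderiv ℝ (fderiv ℝ Ψ) (u, v) with hΨ''
  -- mixed partial Ψ'' (1,0) (0,1) : derivative in u of x ↦ fderiv Ψ (x,v)(0,1)
  have hg2 : ContDiff ℝ (⊤ : ℕ∞) (fun q => fderiv ℝ Ψ q ((0:ℝ), (1:ℝ))) :=
    (hΨ.fderiv_right (by simp)).clm_apply contDiff_const
  have hmix1 : HasDerivAt (fun x => fderiv ℝ Ψ (x, v) (0, 1)) (Ψ'' (1, 0) (0, 1)) u := by
    have h1 := slice_u (fun q => fderiv ℝ Ψ q (0, 1)) hg2 u v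
    rwa [fderiv_eval Ψ hΨ (u, v) (0, 1)] at h1
  -- mixed partial Ψ'' (0,1) (1,0) : derivative in v of y ↦ fderiv Ψ (u,y)(1,0)
  have hg1 : ContDiff ℝ (⊤ : ℕ∞) (fun q => fderiv ℝ Ψ q ((1:ℝ), (0:ℝ))) :=
    (hΨ.fderiv_right (by simp)).clm_apply contDiff_const
  have hmix2 : HasDerivAt (fun y => fderiv ℝ Ψ (u, y) (1, 0)) (Ψ'' (0, 1) (1, 0)) v := by
    have h1 := slice_v (fun q => fderiv ℝ Ψ q (1, 0)) hg1 u v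
    rwa [fderiv_eval Ψ hΨ (u, v) (1, 0)] at h1
  -- symmetry of second derivative of Ψ
  have hsym : Ψ'' (0, 1) (1, 0) = Ψ'' (1, 0) (0, 1) :=
    second_derivative_symmetric
      (fun y => ((hΨ.differentiable (by simp)) y).hasFDerivAt)
      ((((hΨ.fderiv_right (m := (⊤ : ℕ∞)) (by simp)).differentiable (by simp)) (u, v)).hasFDerivAt)
      (0, 1) (1, 0)
  -- compute Ψ'' (1,0)(0,1) = -K c p using hcompat near u
  have hnearu : ∀ᶠ x in nhds u, (x, v) ∈ D := by
    have : Continuous (fun x : ℝ => (x, v)) := continuous_id.prodMk continuous_const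
    exact this.continuousAt.preimage_mem_nhds (hD.mem_nhds huv)
  have hmix1' : HasDerivAt (fun x => -K * Real.sin (φ x v)) (Ψ'' (1, 0) (0, 1)) u := by
    apply hmix1.congr_of_eventuallyEq
    filter_upwards [hnearu] with x hx
    rw [← hpvpu x v, hcompat x v hx]
  have hmix1'' : HasDerivAt (fun x => -K * Real.sin (φ x v)) (-K * (Real.cos (φ u v) * p)) u :=
    (hDφu.sin).const_mul (-K)
  have hval1 : Ψ'' (1, 0) (0, 1) = -K * (c * p) := hmix1'.unique hmix1''
  -- compute Ψ'' (0,1)(1,0) as derivative of the RHS of heq in v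
  have hnearv : ∀ᶠ y in nhds v, (u, y) ∈ D := by
    have : Continuous (fun y : ℝ => (u, y)) := continuous_const.prodMk continuous_id
    exact this.continuousAt.preimage_mem_nhds (hD.mem_nhds huv)
  have hmix2' : HasDerivAt
      (fun y => Real.cos (φ u y) / Real.sin (φ u y) * ((A u) ^ 2 - Ψ (u, y) ^ 2)
        + r * Ψ (u, y)) (Ψ'' (0, 1) (1, 0)) v := by
    apply hmix2.congr_of_eventuallyEq
    filter_upwards [hnearv] with y hy
    rw [← hpuΨ u y, ← hpupu u y]
    exact (heq u y hy).symm
  -- explicit derivative of the RHS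
  have hcosD : HasDerivAt (fun y => Real.cos (φ u y)) (-s * φv) v := by
    simpa [hs] using hDφv.cos
  have hsinD : HasDerivAt (fun y => Real.sin (φ u y)) (c * φv) v := by
    simpa [hc, mul_comm] using hDφv.sin
  have hquot : HasDerivAt (fun y => Real.cos (φ u y) / Real.sin (φ u y))
      ((-s * φv * s - c * (c * φv)) / s ^ 2) v := hcosD.div hsinD hsne
  have hsq : HasDerivAt (fun y => (A u) ^ 2 - Ψ (u, y) ^ 2)
      (0 - 2 * Ψ (u, v) * (-K * s)) v := by
    have := (hDΨv.pow 2)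
    have h2 : HasDerivAt (fun y => Ψ (u, y) ^ 2) (2 * Ψ (u, v) * (-K * s)) v := by
      simpa [Pi.pow_def, mul_comm, mul_assoc, mul_left_comm] using this
    exact (hasDerivAt_const v ((A u) ^ 2)).sub h2
  have hRHS : HasDerivAt
      (fun y => Real.cos (φ u y) / Real.sin (φ u y) * ((A u) ^ 2 - Ψ (u, y) ^ 2)
        + r * Ψ (u, y))
      ((-s * φv * s - c * (c * φv)) / s ^ 2 * ((A u) ^ 2 - Ψ (u, v) ^ 2)
        + c / s * (0 - 2 * Ψ (u, v) * (-K * s)) + r * (-K * s)) v := by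
    have h1 := (hquot.mul hsq)
    have h2 := hDΨv.const_mul r
    have := h1.add h2
    simpa [hs, hc, Pi.mul_def, Pi.add_def] using this
  have hEq : Ψ'' (0, 1) (1, 0) =
      (-s * φv * s - c * (c * φv)) / s ^ 2 * ((A u) ^ 2 - Ψ (u, v) ^ 2)
        + c / s * (0 - 2 * Ψ (u, v) * (-K * s)) + r * (-K * s) :=
    hmix2'.unique hRHS
  have hΨuv : Ψ (u, v) = p := (hpuΨ u v).symm
  rw [hΨuv] at hEq
  rw [hsym, hval1] at hEq
  -- now pure algebra
  have hK2 : K ^ 2 = 1 := by rcases hK with h | h <;> simp [h]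
  have hs2 : s ^ 2 + c ^ 2 = 1 := by
    rw [hs, hc]; exact Real.sin_sq_add_cos_sq _
  -- hEq : -K * (c * p) = (-s*φv*s - c*(c*φv))/s^2 * (A u^2 - p^2) + c/s*(0-2*p*(-K*s)) + r*(-K*s)
  rw [div_mul_eq_mul_div, div_mul_eq_mul_div] at hEq
  field_simp at hEq ⊢
  have key : (K * φv * ((A u) ^ 2 - p ^ 2)) * s = s ^ 2 * (c * p * 3 - s * r) * s := by
    linear_combination K * s * hEq + (3 * c * p * s ^ 3 - r * s ^ 4) * hK2
      - (K * φv * ((A u) ^ 2 - p ^ 2) * s) * hs2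
  exact mul_right_cancel₀ hsne key
end
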